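/- arXiv:2309.03423 — 2 statements merged into one kernel-verified Lean document; each statement's English description precedes it below -/
import Mathlib

section
/- Let d ≥ 1, θ, ω ∈ 𝕋^b, and B, V : 𝕋^b → Mat(d,ℂ) with B(θ') invertible for all θ'. Then for every E ∈ ℂ and every n ≥ 1, the finite-volume periodic determinant satisfies |f_{E,n}(θ)| = |det(M_{n,E}(θ) − I_{2d})| · ∏_{j=0}^{n−1} |det B(θ+jω)|. -/
noncomputable section

open Matrix

variable {b d : ℕ}

/-- The finite-volume block matrix `P_n(θ)` with periodic boundary conditions:
diagonal blocks `V(θ+(n−j)ω)`, subdiagonal blocks `B(θ+(n−j)ω)`, superdiagonal blocks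
`B(θ+(n−j)ω)*` (1-based `j`), and corner blocks `B(θ)` (top right) and `B(θ)*`
(bottom left). -/
def Pmat (B V : (Fin b → ℝ) → Matrix (Fin d) (Fin d) ℂ) (ω : Fin b → ℝ) (n : ℕ)
    (θ : Fin b → ℝ) : Matrix (Fin n × Fin d) (Fin n × Fin d) ℂ := fun p q =>
  (if p.1 = q.1 then V (θ + ((n - 1 - (p.1 : ℕ) : ℕ) : ℝ) • ω) p.2 q.2 else 0)
  + (if (p.1 : ℕ) = (q.1 : ℕ) + 1 then B (θ + ((n - 1 - (q.1 : ℕ) : ℕ) : ℝ) • ω) p.2 q.2 else 0)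
  + (if (q.1 : ℕ) = (p.1 : ℕ) + 1 then (B (θ + ((n - 1 - (p.1 : ℕ) : ℕ) : ℝ) • ω))ᴴ p.2 q.2 else 0)
  + (if (p.1 : ℕ) = 0 ∧ (q.1 : ℕ) = n - 1 then B θ p.2 q.2 else 0)
  + (if (q.1 : ℕ) = 0 ∧ (p.1 : ℕ) = n - 1 then (B θ)ᴴ p.2 q.2 else 0)

/-- `f_{E,n}(θ) = det(P_n(θ) − E·I_{nd})`. -/
def fdet (B V : (Fin b → ℝ) → Matrix (Fin d) (Fin d) ℂ) (ω : Fin b → ℝ) (E : ℂ) (n : ℕ)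
    (θ : Fin b → ℝ) : ℂ :=
  (Pmat B V ω n θ - E • (1 : Matrix (Fin n × Fin d) (Fin n × Fin d) ℂ)).det

/-- The one-step transfer matrix `M_E(θ) = [[(E·I−V(θ))B(θ)⁻¹, −B(θ)*],[B(θ)⁻¹, 0]]`. -/
def Mtrans (B V : (Fin b → ℝ) → Matrix (Fin d) (Fin d) ℂ) (E : ℂ) (θ : Fin b → ℝ) :
    Matrix (Fin d ⊕ Fin d) (Fin d ⊕ Fin d) ℂ :=
  Matrix.fromBlocks ((E • (1 : Matrix (Fin d) (Fin d) ℂ) - V θ) * (B θ)⁻¹) (-((B θ)ᴴ))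
    (B θ)⁻¹ 0

/-- The `n`-step transfer matrix `M_{n,E}(θ) = M_E(θ+(n−1)ω)···M_E(θ)`. -/
def MtransN (B V : (Fin b → ℝ) → Matrix (Fin d) (Fin d) ℂ) (ω : Fin b → ℝ) (E : ℂ) :
    ℕ → (Fin b → ℝ) → Matrix (Fin d ⊕ Fin d) (Fin d ⊕ Fin d) ℂ
  | 0, _ => 1
  | n + 1, θ => MtransN B V ω E n (θ + ω) * Mtrans B V E θ

/-!
Reversing the block order turns `P_n(θ) − E` into the periodic block Jacobi matrix `J` with
blocks `A k = V(θ + kω) − E`, `B k = B(θ + kω)` and `C k = B(θ + kω)*`. The equation `J ψ = 0` is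
the first-order system `Φ (k + 1) = M_E(θ + kω) Φ k` for `Φ k = (B k ψ k, ψ (k - 1))`; its
block matrix `K = 1 − (M_E(θ + kω) on the block subdiagonal, cyclically)` has determinant
`det (1 − M_{n,E}(θ))`, by induction on `n` through Schur complements. Multiplying `K` by
`diag (B k, 1)` and eliminating the variables `ψ (k - 1)` by one more Schur complement gives back
`J` up to a cyclic permutation of the block rows, so `± det J = det (1 − M_{n,E}(θ)) ∏ det B k`.
-/

section DescProd

variable {M : Type*} [Monoid M]

def descProd (g : ℕ → M) : ℕ → M
  | 0 => 1
  | n + 1 => g n * descProd g n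

lemma descProd_succ' (g : ℕ → M) (n : ℕ) :
    descProd g (n + 1) = descProd (fun t => g (t + 1)) n * g 0 := by
  induction n with
  | zero => simp [descProd]
  | succ n ih => rw [descProd, ih, descProd, mul_assoc]

end DescProd

lemma Fin.eq_add_one_iff_val {m : ℕ} (k j : Fin (m + 1)) :
    k = j + 1 ↔ (k : ℕ) = j + 1 ∨ (k : ℕ) = 0 ∧ (j : ℕ) = m := by
  rw [Fin.ext_iff, Fin.val_add_one]
  split_ifs with h <;> simp [Fin.ext_iff] at h <;> omega

section BlockMatrices

variable {R : Type*} [CommRing R] {δ : Type*}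

def blockShift (δ : Type*) (m : ℕ) : Equiv.Perm (δ × Fin (m + 1)) :=
  (Equiv.refl δ).prodCongr (Equiv.addRight 1)

@[simp] lemma blockShift_apply (m : ℕ) (p : δ × Fin (m + 1)) :
    blockShift δ m p = (p.1, p.2 + 1) := rfl

@[simp] lemma blockShift_symm_apply (m : ℕ) (p : δ × Fin (m + 1)) :
    (blockShift δ m).symm p = (p.1, p.2 - 1) := by
  rw [Equiv.symm_apply_eq]; simp

lemma blockDiagonal_submatrix_shift {m : ℕ} (F : Fin (m + 1) → Matrix δ δ R) :
    (blockDiagonal F).submatrix (blockShift δ m) id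
      = of fun p q => if p.2 + 1 = q.2 then F q.2 p.1 q.1 else 0 := by
  ext ⟨a, k⟩ ⟨c, j⟩
  simp only [submatrix_apply, blockShift_apply, id_eq, blockDiagonal_apply, of_apply]
  split_ifs with h
  · rw [h]
  · rfl

def splitLast (δ : Type*) (n : ℕ) : (δ × Fin (n + 1)) ⊕ δ ≃ δ × Fin (n + 2) :=
  ((Equiv.sumCongr (Equiv.refl _) (Equiv.prodUnique δ (Fin 1)).symm).trans
    (Equiv.prodSumDistrib δ (Fin (n + 1)) (Fin 1)).symm).trans
    ((Equiv.refl δ).prodCongr finSumFinEquiv)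

@[simp] lemma splitLast_inl (n : ℕ) (p : δ × Fin (n + 1)) :
    splitLast δ n (Sum.inl p) = (p.1, p.2.castSucc) := rfl

@[simp] lemma splitLast_inr (n : ℕ) (a : δ) :
    splitLast δ n (Sum.inr a) = (a, Fin.last (n + 1)) := rfl

variable [DecidableEq δ]

def bidiagCorner (g : ℕ → Matrix δ δ R) (C : Matrix δ δ R) (n : ℕ) :
    Matrix (δ × Fin (n + 1)) (δ × Fin (n + 1)) R := fun p q =>
  (1 : Matrix (δ × Fin (n + 1)) (δ × Fin (n + 1)) R) p q
    - (if (p.2 : ℕ) = q.2 + 1 then g q.2 p.1 q.1 else 0)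
    - (if (p.2 : ℕ) = 0 ∧ (q.2 : ℕ) = n then C p.1 q.1 else 0)

lemma bidiagCorner_succ_submatrix (g : ℕ → Matrix δ δ R) (C : Matrix δ δ R) (n : ℕ) :
    (bidiagCorner g C (n + 1)).submatrix (splitLast δ n) (splitLast δ n)
      = fromBlocks (bidiagCorner g 0 n) (-of fun p c => if (p.2 : ℕ) = 0 then C p.1 c else 0)
          (-of fun c q => if (q.2 : ℕ) = n then g n c q.1 else 0) 1 := by
  ext (⟨a, k⟩ | a) (⟨c, j⟩ | c) <;>
    simp only [bidiagCorner, submatrix_apply, splitLast_inl, splitLast_inr, fromBlocks_apply₁₁,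
      fromBlocks_apply₁₂, fromBlocks_apply₂₁, fromBlocks_apply₂₂, one_apply, Prod.mk.injEq,
      Fin.ext_iff, Fin.val_castSucc, Fin.val_last, Matrix.zero_apply, Matrix.neg_apply,
      of_apply] <;>
    split_ifs <;> grind

lemma one_sub_blockDiagonal_submatrix_shift_eq_bidiagCorner (g : ℕ → Matrix δ δ R) (m : ℕ) :
    1 - (blockDiagonal fun k : Fin (m + 1) => g k).submatrix (blockShift δ m).symm id
      = bidiagCorner g (g m) m := by
  ext ⟨a, k⟩ ⟨c, j⟩
  have hkj := Fin.eq_add_one_iff_val k j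
  by_cases h : k = j + 1
  · have hk : k - 1 = j := by rw [h, add_sub_cancel_right]
    simp only [Matrix.sub_apply, submatrix_apply, blockShift_symm_apply, id_eq,
      blockDiagonal_apply, bidiagCorner, hk]
    rcases hkj.1 h with h' | h' <;> simp [h']
  · have hk : k - 1 ≠ j := fun hk => h (by rw [← hk, sub_add_cancel])
    simp only [Matrix.sub_apply, submatrix_apply, blockShift_symm_apply, id_eq,
      blockDiagonal_apply, bidiagCorner, hk]
    rw [hkj, not_or] at h
    simp only [if_false, if_neg h.1, if_neg h.2, sub_zero]

variable [Fintype δ]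

lemma det_bidiagCorner_zero (g : ℕ → Matrix δ δ R) (C : Matrix δ δ R) :
    (bidiagCorner g C 0).det = (1 - C).det := by
  rw [← det_submatrix_equiv_self (Equiv.prodUnique δ (Fin 1)).symm]
  congr 1
  ext a c
  simp [bidiagCorner, one_apply]

lemma bidiagCorner_zero_sub_mul (g : ℕ → Matrix δ δ R) (C : Matrix δ δ R) (n : ℕ) :
    bidiagCorner g 0 n - (-of fun p c => if (p.2 : ℕ) = 0 then C p.1 c else 0) *
        (-of fun c q => if (q.2 : ℕ) = n then g n c q.1 else 0)
      = bidiagCorner g (C * g n) n := by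
  ext p q
  by_cases h₁ : (p.2 : ℕ) = 0 <;> by_cases h₂ : (q.2 : ℕ) = n <;>
    simp_all [bidiagCorner, mul_apply]

lemma det_bidiagCorner (g : ℕ → Matrix δ δ R) (n : ℕ) (C : Matrix δ δ R) :
    (bidiagCorner g C n).det = (1 - C * descProd g n).det := by
  induction n generalizing C with
  | zero => simp [det_bidiagCorner_zero, descProd]
  | succ n ih =>
    rw [← det_submatrix_equiv_self (splitLast δ n), bidiagCorner_succ_submatrix,
      det_fromBlocks_one₂₂, bidiagCorner_zero_sub_mul, ih, descProd, Matrix.mul_assoc]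

lemma det_one_sub_blockDiagonal_submatrix_shift (g : ℕ → Matrix δ δ R) (m : ℕ) :
    (1 - (blockDiagonal fun k : Fin (m + 1) => g k).submatrix (blockShift δ m).symm id).det
      = (1 - descProd g (m + 1)).det := by
  rw [one_sub_blockDiagonal_submatrix_shift_eq_bidiagCorner, det_bidiagCorner, descProd]

end BlockMatrices

section PeriodicJacobi

variable {R : Type*} [CommRing R] {δ : Type*} [Fintype δ] [DecidableEq δ]
  (A B C : ℕ → Matrix δ δ R) (m : ℕ)

/-- Blocks `A k` at `(k, k)`, `B (k + 1)` at `(k, k + 1)` and `C k` at `(k, k - 1)`,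
block indices mod `m + 1`. -/
def periodicJacobi : Matrix (δ × Fin (m + 1)) (δ × Fin (m + 1)) R :=
  blockDiagonal (fun k : Fin (m + 1) => A k)
    + (blockDiagonal fun k : Fin (m + 1) => B k).submatrix (blockShift δ m) id
    + (blockDiagonal fun k : Fin (m + 1) => C k).submatrix id (blockShift δ m)

/-- The transfer matrix of `B (k + 1) ψ (k + 1) + A k ψ k + C k ψ (k - 1) = 0`, acting on
`(B k ψ k, ψ (k - 1))`. -/
def transfer (t : ℕ) : Matrix (δ ⊕ δ) (δ ⊕ δ) R :=
  fromBlocks (-A t * (B t)⁻¹) (-C t) (B t)⁻¹ 0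

variable {A B} in
lemma transfer_mul_fromBlocks {t : ℕ} (hB : IsUnit (B t).det) :
    transfer A B C t * fromBlocks (B t) 0 0 1 = fromBlocks (-A t) (-C t) 1 0 := by
  simp [transfer, fromBlocks_multiply, nonsing_inv_mul_cancel_right _ _ hB, nonsing_inv_mul _ hB]

omit [Fintype δ] in
lemma blockDiagonal_sub_shift_submatrix_sumProdDistrib :
    ((blockDiagonal fun k : Fin (m + 1) => fromBlocks (B k) 0 0 1)
        - (blockDiagonal fun k : Fin (m + 1) => fromBlocks (-A k) (-C k) 1 0).submatrix
            (blockShift (δ ⊕ δ) m).symm id).submatrix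
          (Equiv.sumProdDistrib δ δ (Fin (m + 1))).symm (Equiv.sumProdDistrib δ δ (Fin (m + 1))).symm
      = fromBlocks
          ((blockDiagonal fun k : Fin (m + 1) => B k)
            + (blockDiagonal fun k : Fin (m + 1) => A k).submatrix (blockShift δ m).symm id)
          ((blockDiagonal fun k : Fin (m + 1) => C k).submatrix (blockShift δ m).symm id)
          (-(1 : Matrix (δ × Fin (m + 1)) (δ × Fin (m + 1)) R).submatrix (blockShift δ m).symm id)
          1 := by
  ext (⟨a, k⟩ | ⟨a, k⟩) (⟨c, j⟩ | ⟨c, j⟩) <;>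
    simp only [submatrix_apply, Equiv.sumProdDistrib_symm_apply_left,
      Equiv.sumProdDistrib_symm_apply_right, blockShift_symm_apply, id_eq, Matrix.sub_apply,
      Matrix.add_apply, Matrix.neg_apply, fromBlocks_apply₁₁, fromBlocks_apply₁₂,
      fromBlocks_apply₂₁, fromBlocks_apply₂₂, blockDiagonal_apply, one_apply, Prod.mk.injEq] <;>
    split_ifs <;> simp_all

lemma periodicJacobi_submatrix_shift_symm :
    (periodicJacobi A B C m).submatrix (blockShift δ m).symm id
      = (blockDiagonal fun k : Fin (m + 1) => B k)
          + (blockDiagonal fun k : Fin (m + 1) => A k).submatrix (blockShift δ m).symm id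
          - (blockDiagonal fun k : Fin (m + 1) => C k).submatrix (blockShift δ m).symm id
            * -(1 : Matrix (δ × Fin (m + 1)) (δ × Fin (m + 1)) R).submatrix
                (blockShift δ m).symm id := by
  rw [mul_neg, sub_neg_eq_add, mul_submatrix_one, periodicJacobi]
  simp only [submatrix_add, Pi.add_apply, submatrix_submatrix, Equiv.self_comp_symm,
    Function.comp_id, Function.id_comp, submatrix_id_id]
  abel

theorem sign_mul_det_periodicJacobi (hB : ∀ k : Fin (m + 1), IsUnit (B k).det) :
    (Equiv.Perm.sign (blockShift δ m).symm : R) * (periodicJacobi A B C m).det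
      = (1 - descProd (transfer A B C) (m + 1)).det * ∏ k : Fin (m + 1), (B k).det := by
  set D := blockDiagonal fun k : Fin (m + 1) => fromBlocks (B k) 0 0 (1 : Matrix δ δ R)
  have hD : D.det = ∏ k : Fin (m + 1), (B k).det := by simp [D, det_blockDiagonal]
  have hKD : (1 - (blockDiagonal fun k : Fin (m + 1) => transfer A B C k).submatrix
      (blockShift (δ ⊕ δ) m).symm id) * D
      = D - (blockDiagonal fun k : Fin (m + 1) => fromBlocks (-A k) (-C k) 1 0).submatrix
            (blockShift (δ ⊕ δ) m).symm id := by
    have hY : (fun k : Fin (m + 1) => transfer A B C k * fromBlocks (B k) 0 0 1)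
        = fun k : Fin (m + 1) => fromBlocks (-A k) (-C k) 1 0 :=
      funext fun k => transfer_mul_fromBlocks C (hB k)
    rw [sub_mul, Matrix.one_mul, ← submatrix_id_id D,
      ← submatrix_mul _ _ _ _ _ Function.bijective_id, ← blockDiagonal_mul, hY, submatrix_id_id]
  rw [← det_permute, periodicJacobi_submatrix_shift_symm, ← det_fromBlocks_one₂₂,
    ← blockDiagonal_sub_shift_submatrix_sumProdDistrib, det_submatrix_equiv_self, ← hKD, det_mul,
    det_one_sub_blockDiagonal_submatrix_shift, hD]

end PeriodicJacobi

lemma Pmat_sub_smul_one_eq_submatrix (B V : (Fin b → ℝ) → Matrix (Fin d) (Fin d) ℂ)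
    (ω θ : Fin b → ℝ) (E : ℂ) (m : ℕ) :
    Pmat B V ω (m + 1) θ - E • 1
      = (periodicJacobi (fun t => V (θ + (t : ℝ) • ω) - E • 1) (fun t => B (θ + (t : ℝ) • ω))
          (fun t => (B (θ + (t : ℝ) • ω))ᴴ) m).submatrix
          ((Equiv.prodComm _ _).trans ((Equiv.refl _).prodCongr Fin.revPerm))
          ((Equiv.prodComm _ _).trans ((Equiv.refl _).prodCongr Fin.revPerm)) := by
  rw [periodicJacobi, blockDiagonal_submatrix_shift]
  ext ⟨k, a⟩ ⟨l, c⟩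
  simp only [Pmat, submatrix_apply, Matrix.sub_apply, Matrix.add_apply,
    Matrix.smul_apply, Equiv.trans_apply, Equiv.prodComm_apply, Prod.swap_prod_mk,
    Equiv.prodCongr_apply, Prod.map_apply, Equiv.refl_apply, Fin.revPerm_apply,
    id_eq, blockShift_apply, blockDiagonal_apply, of_apply, Fin.eq_add_one_iff_val,
    eq_comm (a := Fin.rev k + 1), Fin.val_rev, Fin.rev_inj, Nat.add_sub_cancel,
    Nat.add_sub_add_right, one_apply, Prod.mk.injEq, smul_eq_mul]
  -- for `m = 0` the corner blocks lie on the diagonal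
  rcases Nat.eq_zero_or_pos m with rfl | hm <;> split_ifs <;> (try omega) <;> simp_all <;> ring

lemma MtransN_eq_descProd (B V : (Fin b → ℝ) → Matrix (Fin d) (Fin d) ℂ) (ω : Fin b → ℝ) (E : ℂ)
    (n : ℕ) (θ : Fin b → ℝ) :
    MtransN B V ω E n θ = descProd (fun t : ℕ => Mtrans B V E (θ + (t : ℝ) • ω)) n := by
  induction n generalizing θ with
  | zero => rfl
  | succ n ih =>
    rw [MtransN, ih, descProd_succ']
    congr 2
    · ext1 t; congr 1; push_cast; module
    · simp

lemma transfer_eq_Mtrans (B V : (Fin b → ℝ) → Matrix (Fin d) (Fin d) ℂ) (ω θ : Fin b → ℝ) (E : ℂ) :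
    transfer (fun t => V (θ + (t : ℝ) • ω) - E • 1) (fun t => B (θ + (t : ℝ) • ω))
        (fun t => (B (θ + (t : ℝ) • ω))ᴴ) = fun t : ℕ => Mtrans B V E (θ + (t : ℝ) • ω) := by
  ext1 t
  simp only [transfer, Mtrans, neg_sub]

theorem abs_fdet_eq_general
    (B V : (Fin b → ℝ) → Matrix (Fin d) (Fin d) ℂ)
    (hB : ∀ θ : Fin b → ℝ, IsUnit (B θ).det)
    (θ ω : Fin b → ℝ) (E : ℂ) (n : ℕ) (hn : 1 ≤ n) :
    ‖fdet B V ω E n θ‖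
      = ‖(MtransN B V ω E n θ - 1).det‖
        * ∏ j ∈ Finset.range n, ‖(B (θ + (j : ℝ) • ω)).det‖ := by
  obtain ⟨m, rfl⟩ : ∃ m, n = m + 1 := ⟨n - 1, by omega⟩
  have key := sign_mul_det_periodicJacobi (fun t : ℕ => V (θ + (t : ℝ) • ω) - E • 1)
    (fun t => B (θ + (t : ℝ) • ω)) (fun t => (B (θ + (t : ℝ) • ω))ᴴ) m fun _ => hB _
  rw [transfer_eq_Mtrans, ← MtransN_eq_descProd] at key
  set J := periodicJacobi (fun t : ℕ => V (θ + (t : ℝ) • ω) - E • 1)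
    (fun t => B (θ + (t : ℝ) • ω)) (fun t => (B (θ + (t : ℝ) • ω))ᴴ) m
  have hsign : ‖((Equiv.Perm.sign (blockShift (Fin d) m).symm : ℤ) : ℂ)‖ = 1 := by
    rw [Complex.norm_intCast, ← Int.cast_abs, Equiv.Perm.sign_abs, Int.cast_one]
  calc ‖fdet B V ω E (m + 1) θ‖
      = ‖((Equiv.Perm.sign (blockShift (Fin d) m).symm : ℤ) : ℂ) * J.det‖ := by
        rw [fdet, Pmat_sub_smul_one_eq_submatrix, det_submatrix_equiv_self, norm_mul, hsign, one_mul]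
    _ = ‖(1 - MtransN B V ω E (m + 1) θ).det‖ * ∏ k : Fin (m + 1), ‖(B (θ + (k : ℝ) • ω)).det‖ := by
        rw [key, norm_mul, norm_prod]
    _ = _ := by
        rw [← neg_sub, det_neg, norm_mul, norm_pow, norm_neg, norm_one, one_pow, one_mul,
          Fin.prod_univ_eq_prod_range (fun j => ‖(B (θ + (j : ℝ) • ω)).det‖)]

/-- `|f_{E,n}(θ)| = |det(M_{n,E}(θ) − I_{2d})| · ∏_{j=0}^{n−1} |det B(θ+jω)|`. -/
theorem abs_fdet_eq (hb : 1 ≤ b) (hd : 1 ≤ d)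
    (B V : (Fin b → ℝ) → Matrix (Fin d) (Fin d) ℂ)
    (hB : ∀ θ : Fin b → ℝ, IsUnit (B θ).det)
    (θ ω : Fin b → ℝ) (E : ℂ) (n : ℕ) (hn : 1 ≤ n) :
    ‖fdet B V ω E n θ‖
      = ‖(MtransN B V ω E n θ - 1).det‖
        * ∏ j ∈ Finset.range n, ‖(B (θ + (j : ℝ) • ω)).det‖ :=
  abs_fdet_eq_general B V hB θ ω E n hn
end
end

section
/- Fix d ≥ 1, complex numbers v₁,…,v_d with v_d ≠ 0 and v_{−k} := conj(v_k), a function g : 𝕋 → ℂ, and ω, θ ∈ 𝕋. Let V(θ) ∈ Mat(d,ℂ) have entries V_{jk} = g(θ + (d−j)d^{-1}ω) if j = k, V_{jk} = v_{k−j} if k > j, and V_{jk} = conj(v_{j−k}) if j > k (indices 1,…,d), and let B ∈ Mat(d,ℂ) be the upper-triangular matrix with B_{jk} = conj(v_{d−(k−j)}) for k ≥ j and B_{jk} = 0 for k < j. Let M_E(θ) = [[(E·I_d − V(θ))B^{-1}, −B*],[B^{-1}, 0]] and let A_E(θ) be the 2d×2d companion-type matrix with (A_E)_{1,k} = −v_{k−d}/v_{−d}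 for 1 ≤ k ≤ d−1, (A_E)_{1,d} = (E − g(θ))/v_{−d}, (A_E)_{1,d+k} = −v_k/v_{−d} for 1 ≤ k ≤ d, (A_E)_{j,j−1} = 1 for 2 ≤ j ≤ 2d, and all other entries 0. Then M_E(θ) = diag(B, I_d) · A_E(θ + (d−1)d^{-1}ω) ··· A_E(θ + d^{-1}ω) A_E(θ) · diag(B^{-1}, I_d). -/
noncomputable section

open Matrix

variable {d : ℕ}

/-- The block potential matrix `V(θ)` of the long-range operator: diagonal entries
`g(θ+(d−j)d⁻¹ω)` (1-based `j`), entries `v_{k−j}` above the diagonal and `conj(v_{j−k})`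
below it. -/
def Vlr (d : ℕ) (v : ℕ → ℂ) (g : ℝ → ℂ) (ω θ : ℝ) : Matrix (Fin d) (Fin d) ℂ := fun j k =>
  if j = k then g (θ + ((d - 1 - (j : ℕ) : ℕ) : ℝ) * (ω / d))
  else if (j : ℕ) < (k : ℕ) then v ((k : ℕ) - (j : ℕ))
  else starRingEnd ℂ (v ((j : ℕ) - (k : ℕ)))

/-- The hopping matrix `B`: upper triangular with `B_{jk} = conj(v_{d−(k−j)})` for `k ≥ j`. -/
def Blr (d : ℕ) (v : ℕ → ℂ) : Matrix (Fin d) (Fin d) ℂ := fun j k =>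
  if (j : ℕ) ≤ (k : ℕ) then starRingEnd ℂ (v (d - ((k : ℕ) - (j : ℕ)))) else 0

/-- The companion-type one-step transfer matrix `A_E(θ)` of the scalar long-range
eigenvalue equation. -/
def AElr (d : ℕ) (v : ℕ → ℂ) (g : ℝ → ℂ) (E : ℂ) (θ : ℝ) :
    Matrix (Fin (2 * d)) (Fin (2 * d)) ℂ := fun i c =>
  if (i : ℕ) = 0 then
    (if (c : ℕ) = d - 1 then (E - g θ) / starRingEnd ℂ (v d)
     else if (c : ℕ) < d - 1 then -(starRingEnd ℂ (v (d - 1 - (c : ℕ)))) / starRingEnd ℂ (v d)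
     else -(v ((c : ℕ) + 1 - d)) / starRingEnd ℂ (v d))
  else if (c : ℕ) + 1 = (i : ℕ) then 1 else 0

/-- `d`-fold ordered product `A_E(θ+(d−1)d⁻¹ω)···A_E(θ+d⁻¹ω)A_E(θ)`. -/
def AEprod (d : ℕ) (v : ℕ → ℂ) (g : ℝ → ℂ) (ω : ℝ) (E : ℂ) :
    ℕ → ℝ → Matrix (Fin (2 * d)) (Fin (2 * d)) ℂ
  | 0, _ => 1
  | n + 1, θ => AEprod d v g ω E n (θ + ω / d) * AElr d v g E θ

/-- Identification `Fin d ⊕ Fin d ≃ Fin (2d)`. -/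
def sumEquiv (d : ℕ) : Fin d ⊕ Fin d ≃ Fin (2 * d) :=
  finSumFinEquiv.trans (finCongr (two_mul d).symm)

/-- The transfer matrix `M_E(θ)` of the block realization, reindexed to `Fin (2d)`. -/
def MtransLR (d : ℕ) (v : ℕ → ℂ) (g : ℝ → ℂ) (ω : ℝ) (E : ℂ) (θ : ℝ) :
    Matrix (Fin (2 * d)) (Fin (2 * d)) ℂ :=
  Matrix.reindex (sumEquiv d) (sumEquiv d)
    (Matrix.fromBlocks ((E • (1 : Matrix (Fin d) (Fin d) ℂ) - Vlr d v g ω θ) * (Blr d v)⁻¹)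
      (-((Blr d v)ᴴ)) (Blr d v)⁻¹ 0)

noncomputable def phiSol (d : ℕ) (v : ℕ → ℂ) (g : ℝ → ℂ) (ω : ℝ) (E : ℂ) (θ : ℝ) (c : ℕ) :
    ℕ → ℂ
  | t =>
    if h : t < 2 * d ∨ d = 0 then (if t + c + 1 = 2 * d then 1 else 0)
    else
      ((E - g (θ + ((t - 2 * d : ℕ) : ℝ) * (ω / d))) * phiSol d v g ω E θ c (t - d)
        - ∑ k ∈ Finset.range (d - 1),
            starRingEnd ℂ (v (d - 1 - k)) * phiSol d v g ω E θ c (t - 1 - k)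
        - ∑ k ∈ Finset.range d, v (k + 1) * phiSol d v g ω E θ c (t - d - (k + 1)))
        / starRingEnd ℂ (v d)
  decreasing_by all_goals omega

lemma phiSol_init (d v g ω E θ c t) (h : t < 2 * d) :
    phiSol d v g ω E θ c t = if t + c + 1 = 2 * d then 1 else 0 := by
  rw [phiSol]; simp [h]

lemma phiSol_rec (d v g ω E θ c t) (hd : 1 ≤ d) (h : 2 * d ≤ t) :
    phiSol d v g ω E θ c t =
      ((E - g (θ + ((t - 2 * d : ℕ) : ℝ) * (ω / d))) * phiSol d v g ω E θ c (t - d)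
        - ∑ k ∈ Finset.range (d - 1),
            starRingEnd ℂ (v (d - 1 - k)) * phiSol d v g ω E θ c (t - 1 - k)
        - ∑ k ∈ Finset.range d, v (k + 1) * phiSol d v g ω E θ c (t - d - (k + 1)))
        / starRingEnd ℂ (v d) := by
  rw [phiSol]
  have : ¬ (t < 2 * d ∨ d = 0) := by omega
  simp only [this, dite_false]

lemma AEprod_succ_left (d : ℕ) (v : ℕ → ℂ) (g : ℝ → ℂ) (ω : ℝ) (E : ℂ) (n : ℕ) (θ : ℝ) :
    AEprod d v g ω E (n + 1) θ
      = AElr d v g E (θ + (n : ℝ) * (ω / d)) * AEprod d v g ω E n θ := by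
  induction n generalizing θ with
  | zero => simp [AEprod]
  | succ n ih =>
    show AEprod d v g ω E (n + 1) (θ + ω / d) * AElr d v g E θ = _
    rw [ih]
    have h1 : (θ + ω / d) + (n : ℝ) * (ω / d) = θ + ((n + 1 : ℕ) : ℝ) * (ω / d) := by
      push_cast; ring
    rw [h1, Matrix.mul_assoc]
    rfl

lemma AEprod_apply (d : ℕ) (hd : 1 ≤ d) (v : ℕ → ℂ) (g : ℝ → ℂ) (ω : ℝ) (E : ℂ) (θ : ℝ)
    (n : ℕ) (i c : Fin (2 * d)) :
    AEprod d v g ω E n θ i c = phiSol d v g ω E θ (c : ℕ) (2 * d - 1 - (i : ℕ) + n) := by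
  obtain ⟨m, rfl⟩ : ∃ m, d = m + 1 := ⟨d - 1, by omega⟩
  clear hd
  induction n generalizing i c with
  | zero =>
    have hi := i.isLt; have hc := c.isLt
    show (1 : Matrix _ _ ℂ) i c = _
    rw [Matrix.one_apply, phiSol_init _ _ _ _ _ _ _ _ (by omega)]
    by_cases h : i = c
    · subst h; rw [if_pos rfl, if_pos (by omega)]
    · rw [if_neg h, if_neg (by intro hh; exact h (Fin.ext (by omega)))]
  | succ n ih =>
    have hi2 := i.isLt
    rw [AEprod_succ_left, Matrix.mul_apply]
    by_cases hi : (i : ℕ) = 0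
    · -- top row: the recursion
      have harg : 2 * (m + 1) - 1 - (i : ℕ) + (n + 1) = 2 * (m + 1) + n := by omega
      rw [harg, phiSol_rec _ _ _ _ _ _ _ _ (by omega) (by omega)]
      have hg2 : 2 * (m + 1) + n - 2 * (m + 1) = n := by omega
      rw [hg2]
      set θ' := θ + (n : ℝ) * (ω / (m + 1 : ℕ)) with hθ'
      have hsum : ∑ k : Fin (2 * (m + 1)), AElr (m + 1) v g E θ' i k * AEprod (m + 1) v g ω E n θ k c
          = ∑ k ∈ Finset.range (2 * (m + 1)),
              (if k = m + 1 - 1 then (E - g θ') / starRingEnd ℂ (v (m + 1))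
               else if k < m + 1 - 1 then -(starRingEnd ℂ (v (m + 1 - 1 - k))) / starRingEnd ℂ (v (m + 1))
               else -(v (k + 1 - (m + 1))) / starRingEnd ℂ (v (m + 1)))
                * phiSol (m + 1) v g ω E θ (c : ℕ) (2 * (m + 1) - 1 - k + n) := by
        rw [← Fin.sum_univ_eq_sum_range]
        refine Finset.sum_congr rfl fun k _ => ?_
        rw [ih]
        congr 1
        simp [AElr, hi]
      rw [hsum]
      rw [Finset.range_eq_Ico,
        ← Finset.sum_Ico_consecutive _ (Nat.zero_le (m + 1)) (by omega : m + 1 ≤ 2 * (m + 1)),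
        ← Finset.range_eq_Ico, Finset.sum_range_succ, Finset.sum_Ico_eq_sum_range]
      have h2m : 2 * (m + 1) - (m + 1) = m + 1 := by omega
      rw [h2m]
      -- three pieces
      have h1 : ∑ k ∈ Finset.range m,
          (if k = m + 1 - 1 then (E - g θ') / starRingEnd ℂ (v (m + 1))
           else if k < m + 1 - 1 then -(starRingEnd ℂ (v (m + 1 - 1 - k))) / starRingEnd ℂ (v (m + 1))
           else -(v (k + 1 - (m + 1))) / starRingEnd ℂ (v (m + 1)))
            * phiSol (m + 1) v g ω E θ (c : ℕ) (2 * (m + 1) - 1 - k + n)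
          = -((∑ k ∈ Finset.range (m + 1 - 1),
              starRingEnd ℂ (v (m + 1 - 1 - k))
                * phiSol (m + 1) v g ω E θ (c : ℕ) (2 * (m + 1) + n - 1 - k)) / starRingEnd ℂ (v (m + 1))) := by
        rw [show m + 1 - 1 = m from rfl, Finset.sum_div, ← Finset.sum_neg_distrib]
        refine Finset.sum_congr rfl fun k hk => ?_
        have hk' : k < m := Finset.mem_range.mp hk
        rw [if_neg (by omega), if_pos (by omega),
          show 2 * (m + 1) - 1 - k + n = 2 * (m + 1) + n - 1 - k from by omega]
        ring
      have hFm : (if m = m + 1 - 1 then (E - g θ') / starRingEnd ℂ (v (m + 1))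
           else if m < m + 1 - 1 then -(starRingEnd ℂ (v (m + 1 - 1 - m))) / starRingEnd ℂ (v (m + 1))
           else -(v (m + 1 - (m + 1))) / starRingEnd ℂ (v (m + 1)))
            * phiSol (m + 1) v g ω E θ (c : ℕ) (2 * (m + 1) - 1 - m + n)
          = ((E - g θ') * phiSol (m + 1) v g ω E θ (c : ℕ) (2 * (m + 1) + n - (m + 1))) / starRingEnd ℂ (v (m + 1)) := by
        rw [if_pos (show m = m + 1 - 1 by omega), show 2 * (m + 1) - 1 - m + n = 2 * (m + 1) + n - (m + 1) from by omega]
        ring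
      have h2 : ∑ k ∈ Finset.range (m + 1),
          (if m + 1 + k = m + 1 - 1 then (E - g θ') / starRingEnd ℂ (v (m + 1))
           else if m + 1 + k < m + 1 - 1 then -(starRingEnd ℂ (v (m + 1 - 1 - (m + 1 + k)))) / starRingEnd ℂ (v (m + 1))
           else -(v (m + 1 + k + 1 - (m + 1))) / starRingEnd ℂ (v (m + 1)))
            * phiSol (m + 1) v g ω E θ (c : ℕ) (2 * (m + 1) - 1 - (m + 1 + k) + n)
          = -((∑ k ∈ Finset.range (m + 1),
              v (k + 1) * phiSol (m + 1) v g ω E θ (c : ℕ) (2 * (m + 1) + n - (m + 1) - (k + 1))) / starRingEnd ℂ (v (m + 1))) := by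
        rw [Finset.sum_div, ← Finset.sum_neg_distrib]
        refine Finset.sum_congr rfl fun k hk => ?_
        have hk' : k < m + 1 := Finset.mem_range.mp hk
        rw [if_neg (by omega), if_neg (by omega),
          show m + 1 + k + 1 - (m + 1) = k + 1 from by omega,
          show 2 * (m + 1) - 1 - (m + 1 + k) + n = 2 * (m + 1) + n - (m + 1) - (k + 1) from by omega]
        ring
      rw [h1, hFm, h2]
      ring
    · -- shift rows
      rw [Finset.sum_eq_single (⟨(i : ℕ) - 1, by omega⟩ : Fin (2 * (m + 1)))]
      · rw [ih]
        have : AElr (m + 1) v g E (θ + (n : ℝ) * (ω / ((m + 1 : ℕ) : ℝ))) i ⟨(i : ℕ) - 1, by omega⟩ = 1 := by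
          simp only [AElr, hi, if_false]
          rw [if_pos (by omega)]
        rw [this, one_mul]
        congr 1
        show 2 * (m + 1) - 1 - ((i : ℕ) - 1) + n = 2 * (m + 1) - 1 - (i : ℕ) + (n + 1)
        omega
      · intro b _ hb
        have : AElr (m + 1) v g E (θ + (n : ℝ) * (ω / ((m + 1 : ℕ) : ℝ))) i b = 0 := by
          have hb' : ¬((b : ℕ) + 1 = (i : ℕ)) := by
            intro hh
            refine hb (Fin.ext ?_)
            show (b : ℕ) = (i : ℕ) - 1
            omega
          rw [AElr, if_neg hi, if_neg hb']
        rw [this, zero_mul]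
      · intro h; exact absurd (Finset.mem_univ _) h

lemma sumEquiv_symm_apply (d : ℕ) (i : Fin (2 * d)) :
    (sumEquiv d).symm i
      = if h : (i : ℕ) < d then Sum.inl ⟨(i : ℕ), h⟩
        else Sum.inr ⟨(i : ℕ) - d, by have := i.isLt; omega⟩ := by
  rw [Equiv.symm_apply_eq]
  split_ifs with h
  · apply Fin.ext
    simp [sumEquiv]
  · apply Fin.ext
    have := i.isLt
    simp [sumEquiv]
    omega

lemma reindex_fromBlocks_apply (d : ℕ) (A B C D : Matrix (Fin d) (Fin d) ℂ) (i c : Fin (2 * d)) :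
    Matrix.reindex (sumEquiv d) (sumEquiv d) (Matrix.fromBlocks A B C D) i c
      = if hi : (i : ℕ) < d then
          (if hc : (c : ℕ) < d then A ⟨(i : ℕ), hi⟩ ⟨(c : ℕ), hc⟩
           else B ⟨(i : ℕ), hi⟩ ⟨(c : ℕ) - d, by have := c.isLt; omega⟩)
        else
          (if hc : (c : ℕ) < d then C ⟨(i : ℕ) - d, by have := i.isLt; omega⟩ ⟨(c : ℕ), hc⟩
           else D ⟨(i : ℕ) - d, by have := i.isLt; omega⟩ ⟨(c : ℕ) - d, by have := c.isLt; omega⟩) := by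
  rw [Matrix.reindex_apply, Matrix.submatrix_apply, sumEquiv_symm_apply, sumEquiv_symm_apply]
  split_ifs <;> rfl

lemma key_lemma (d : ℕ) (hd : 1 ≤ d) (v : ℕ → ℂ) (hv : v d ≠ 0) (g : ℝ → ℂ) (ω θ : ℝ) (E : ℂ) :
    Matrix.reindex (sumEquiv d) (sumEquiv d)
        (Matrix.fromBlocks (Blr d v) 0 0 (1 : Matrix (Fin d) (Fin d) ℂ))
      * AEprod d v g ω E d θ
      = Matrix.reindex (sumEquiv d) (sumEquiv d)
          (Matrix.fromBlocks (E • (1 : Matrix (Fin d) (Fin d) ℂ) - Vlr d v g ω θ)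
            (-((Blr d v)ᴴ)) (1 : Matrix (Fin d) (Fin d) ℂ) 0) := by
  have hvc : starRingEnd ℂ (v d) ≠ 0 := by simpa using hv
  ext i c
  have hi2 := i.isLt
  have hc2 := c.isLt
  rw [Matrix.mul_apply]
  by_cases hi : (i : ℕ) < d
  · have hconv : ∀ k : Fin (2 * d),
        Matrix.reindex (sumEquiv d) (sumEquiv d)
            (Matrix.fromBlocks (Blr d v) 0 0 (1 : Matrix (Fin d) (Fin d) ℂ)) i k
          * AEprod d v g ω E d θ k c
        = (if (i : ℕ) ≤ (k : ℕ) ∧ (k : ℕ) < d then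
              starRingEnd ℂ (v (d - ((k : ℕ) - (i : ℕ)))) else 0)
            * phiSol d v g ω E θ (c : ℕ) (2 * d - 1 - (k : ℕ) + d) := by
      intro k
      rw [reindex_fromBlocks_apply, AEprod_apply d hd, dif_pos hi]
      congr 1
      by_cases hk : (k : ℕ) < d
      · rw [dif_pos hk]
        show (if (i : ℕ) ≤ (k : ℕ) then starRingEnd ℂ (v (d - ((k : ℕ) - (i : ℕ)))) else 0) = _
        by_cases hik : (i : ℕ) ≤ (k : ℕ)
        · rw [if_pos hik, if_pos ⟨hik, hk⟩]
        · rw [if_neg hik, if_neg (by tauto)]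
      · rw [dif_neg hk, if_neg (by tauto)]
        exact Matrix.zero_apply _ _
    rw [Finset.sum_congr rfl fun k _ => hconv k,
      Fin.sum_univ_eq_sum_range (fun k =>
        (if (i : ℕ) ≤ k ∧ k < d then starRingEnd ℂ (v (d - (k - (i : ℕ)))) else 0)
          * phiSol d v g ω E θ (c : ℕ) (2 * d - 1 - k + d)) (2 * d),
      Finset.range_eq_Ico,
      ← Finset.sum_Ico_consecutive _ (Nat.zero_le d) (by omega : d ≤ 2 * d)]
    have hupper : (∑ k ∈ Finset.Ico d (2 * d),
        (if (i : ℕ) ≤ k ∧ k < d then starRingEnd ℂ (v (d - (k - (i : ℕ)))) else 0)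
          * phiSol d v g ω E θ (c : ℕ) (2 * d - 1 - k + d)) = 0 := by
      refine Finset.sum_eq_zero fun k hk => ?_
      have := (Finset.mem_Ico.mp hk).1
      rw [if_neg (by omega), zero_mul]
    rw [hupper, add_zero,
      ← Finset.sum_Ico_consecutive _ (Nat.zero_le (i : ℕ)) (le_of_lt hi)]
    have hlower : (∑ k ∈ Finset.Ico 0 (i : ℕ),
        (if (i : ℕ) ≤ k ∧ k < d then starRingEnd ℂ (v (d - (k - (i : ℕ)))) else 0)
          * phiSol d v g ω E θ (c : ℕ) (2 * d - 1 - k + d)) = 0 := by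
      refine Finset.sum_eq_zero fun k hk => ?_
      have := (Finset.mem_Ico.mp hk).2
      rw [if_neg (by omega), zero_mul]
    rw [hlower, zero_add, Finset.sum_Ico_eq_sum_range]
    obtain ⟨mm, hmm⟩ : ∃ mm, d - (i : ℕ) = mm + 1 := ⟨d - (i : ℕ) - 1, by omega⟩
    rw [hmm, Finset.sum_range_succ']
    have hA : (∑ k ∈ Finset.range mm,
        (if (i : ℕ) ≤ (i : ℕ) + (k + 1) ∧ (i : ℕ) + (k + 1) < d then
            starRingEnd ℂ (v (d - ((i : ℕ) + (k + 1) - (i : ℕ)))) else 0)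
          * phiSol d v g ω E θ (c : ℕ) (2 * d - 1 - ((i : ℕ) + (k + 1)) + d))
        = ∑ k ∈ Finset.range mm,
            starRingEnd ℂ (v (d - 1 - k))
              * phiSol d v g ω E θ (c : ℕ) (2 * d - 1 - (i : ℕ) + d - 1 - k) := by
      refine Finset.sum_congr rfl fun k hk => ?_
      have hk' := Finset.mem_range.mp hk
      rw [if_pos (by omega), show d - ((i : ℕ) + (k + 1) - (i : ℕ)) = d - 1 - k from by omega,
        show 2 * d - 1 - ((i : ℕ) + (k + 1)) + d = 2 * d - 1 - (i : ℕ) + d - 1 - k from by omega]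
    have hf0 : (if (i : ℕ) ≤ (i : ℕ) + 0 ∧ (i : ℕ) + 0 < d then
            starRingEnd ℂ (v (d - ((i : ℕ) + 0 - (i : ℕ)))) else 0)
          * phiSol d v g ω E θ (c : ℕ) (2 * d - 1 - ((i : ℕ) + 0) + d)
        = (E - g (θ + ((2 * d - 1 - (i : ℕ) + d - 2 * d : ℕ) : ℝ) * (ω / d)))
            * phiSol d v g ω E θ (c : ℕ) (2 * d - 1 - (i : ℕ) + d - d)
          - ∑ k ∈ Finset.range (d - 1),
              starRingEnd ℂ (v (d - 1 - k))
                * phiSol d v g ω E θ (c : ℕ) (2 * d - 1 - (i : ℕ) + d - 1 - k)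
          - ∑ k ∈ Finset.range d,
              v (k + 1) * phiSol d v g ω E θ (c : ℕ) (2 * d - 1 - (i : ℕ) + d - d - (k + 1)) := by
      rw [if_pos (by omega), show d - ((i : ℕ) + 0 - (i : ℕ)) = d from by omega,
        show (i : ℕ) + 0 = (i : ℕ) from by omega,
        phiSol_rec _ _ _ _ _ _ _ _ hd (by omega), mul_comm, div_mul_cancel₀ _ hvc]
    rw [hA, hf0]
    have hS1split : (∑ k ∈ Finset.range (d - 1),
          starRingEnd ℂ (v (d - 1 - k))
            * phiSol d v g ω E θ (c : ℕ) (2 * d - 1 - (i : ℕ) + d - 1 - k))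
        = (∑ k ∈ Finset.range mm,
            starRingEnd ℂ (v (d - 1 - k))
              * phiSol d v g ω E θ (c : ℕ) (2 * d - 1 - (i : ℕ) + d - 1 - k))
          + ∑ k ∈ Finset.Ico mm (d - 1),
              starRingEnd ℂ (v (d - 1 - k))
                * phiSol d v g ω E θ (c : ℕ) (2 * d - 1 - (i : ℕ) + d - 1 - k) := by
      rw [Finset.range_eq_Ico,
        ← Finset.sum_Ico_consecutive _ (Nat.zero_le mm) (by omega : mm ≤ d - 1),
        ← Finset.range_eq_Ico]
    rw [hS1split]
    have hB : (∑ k ∈ Finset.Ico mm (d - 1),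
          starRingEnd ℂ (v (d - 1 - k))
            * phiSol d v g ω E θ (c : ℕ) (2 * d - 1 - (i : ℕ) + d - 1 - k))
        = if (c : ℕ) < (i : ℕ) then starRingEnd ℂ (v ((i : ℕ) - (c : ℕ))) else 0 := by
      by_cases hci : (c : ℕ) < (i : ℕ)
      · rw [if_pos hci, Finset.sum_eq_single (d - 1 - (i : ℕ) + (c : ℕ))]
        · rw [phiSol_init _ _ _ _ _ _ _ _ (by omega), if_pos (by omega), mul_one,
            show d - 1 - (d - 1 - (i : ℕ) + (c : ℕ)) = (i : ℕ) - (c : ℕ) from by omega]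
        · intro b hb hbne
          have hb' := Finset.mem_Ico.mp hb
          rw [phiSol_init _ _ _ _ _ _ _ _ (by omega), if_neg (by omega), mul_zero]
        · intro hnot
          exact absurd (Finset.mem_Ico.mpr (by omega)) hnot
      · rw [if_neg hci]
        refine Finset.sum_eq_zero fun b hb => ?_
        have hb' := Finset.mem_Ico.mp hb
        rw [phiSol_init _ _ _ _ _ _ _ _ (by omega), if_neg (by omega), mul_zero]
    have hX : phiSol d v g ω E θ (c : ℕ) (2 * d - 1 - (i : ℕ) + d - d)
        = if (c : ℕ) = (i : ℕ) then 1 else 0 := by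
      rw [phiSol_init _ _ _ _ _ _ _ _ (by omega)]
      by_cases hci : (c : ℕ) = (i : ℕ)
      · rw [if_pos (by omega), if_pos hci]
      · rw [if_neg (by omega), if_neg hci]
    have hS2 : (∑ k ∈ Finset.range d,
          v (k + 1) * phiSol d v g ω E θ (c : ℕ) (2 * d - 1 - (i : ℕ) + d - d - (k + 1)))
        = if (i : ℕ) < (c : ℕ) ∧ (c : ℕ) ≤ (i : ℕ) + d then v ((c : ℕ) - (i : ℕ)) else 0 := by
      by_cases hca : (i : ℕ) < (c : ℕ) ∧ (c : ℕ) ≤ (i : ℕ) + d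
      · rw [if_pos hca, Finset.sum_eq_single ((c : ℕ) - (i : ℕ) - 1)]
        · rw [phiSol_init _ _ _ _ _ _ _ _ (by omega), if_pos (by omega), mul_one,
            show (c : ℕ) - (i : ℕ) - 1 + 1 = (c : ℕ) - (i : ℕ) from by omega]
        · intro b hb hbne
          have hb' := Finset.mem_range.mp hb
          rw [phiSol_init _ _ _ _ _ _ _ _ (by omega), if_neg (by omega), mul_zero]
        · intro hnot
          exact absurd (Finset.mem_range.mpr (by omega)) hnot
      · rw [if_neg hca]
        refine Finset.sum_eq_zero fun b hb => ?_
        have hb' := Finset.mem_range.mp hb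
        rw [phiSol_init _ _ _ _ _ _ _ _ (by omega), if_neg (by omega), mul_zero]
    rw [hB, hX, hS2, reindex_fromBlocks_apply, dif_pos hi]
    by_cases hc : (c : ℕ) < d
    · rw [dif_pos hc]
      have hVlr : (E • (1 : Matrix (Fin d) (Fin d) ℂ) - Vlr d v g ω θ) ⟨(i : ℕ), hi⟩ ⟨(c : ℕ), hc⟩
          = E * (if (i : ℕ) = (c : ℕ) then 1 else 0)
            - (if (i : ℕ) = (c : ℕ) then g (θ + ((d - 1 - (i : ℕ) : ℕ) : ℝ) * (ω / d))
               else if (i : ℕ) < (c : ℕ) then v ((c : ℕ) - (i : ℕ))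
               else starRingEnd ℂ (v ((i : ℕ) - (c : ℕ)))) := by
        rw [Matrix.sub_apply, Matrix.smul_apply, Matrix.one_apply, smul_eq_mul]
        congr 1
        · congr 1
          simp [Fin.mk.injEq]
        · show (if (⟨(i : ℕ), hi⟩ : Fin d) = ⟨(c : ℕ), hc⟩ then
              g (θ + ((d - 1 - (i : ℕ) : ℕ) : ℝ) * (ω / d))
            else if (i : ℕ) < (c : ℕ) then v ((c : ℕ) - (i : ℕ))
            else starRingEnd ℂ (v ((i : ℕ) - (c : ℕ)))) = _
          congr 1
          simp [Fin.mk.injEq]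
      rw [hVlr]
      have harg : (2 * d - 1 - (i : ℕ) + d - 2 * d : ℕ) = d - 1 - (i : ℕ) := by omega
      rw [harg]
      split_ifs <;> first | ring1 | (exfalso; omega)
    · rw [dif_neg hc]
      have hBh : (-((Blr d v)ᴴ)) ⟨(i : ℕ), hi⟩ ⟨(c : ℕ) - d, by omega⟩
          = if (c : ℕ) - d ≤ (i : ℕ) then -(v (d - ((i : ℕ) - ((c : ℕ) - d)))) else 0 := by
        rw [Matrix.neg_apply, Matrix.conjTranspose_apply]
        show -star (if ((c : ℕ) - d : ℕ) ≤ (i : ℕ) then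
            starRingEnd ℂ (v (d - ((i : ℕ) - ((c : ℕ) - d)))) else 0) = _
        split_ifs with h
        · rw [← starRingEnd_apply, Complex.conj_conj]
        · simp
      rw [hBh]
      split_ifs <;>
        first
          | ring1
          | (exfalso; omega)
          | (rw [show d - ((i : ℕ) - ((c : ℕ) - d)) = (c : ℕ) - (i : ℕ) from by omega]; ring1)
  · -- bottom rows
    have hone : ∀ k : Fin (2 * d),
        Matrix.reindex (sumEquiv d) (sumEquiv d)
            (Matrix.fromBlocks (Blr d v) 0 0 (1 : Matrix (Fin d) (Fin d) ℂ)) i k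
          * AEprod d v g ω E d θ k c
        = (if (i : ℕ) = (k : ℕ) then 1 else 0)
            * phiSol d v g ω E θ (c : ℕ) (2 * d - 1 - (k : ℕ) + d) := by
      intro k
      rw [reindex_fromBlocks_apply, AEprod_apply d hd, dif_neg hi]
      congr 1
      by_cases hk : (k : ℕ) < d
      · rw [dif_pos hk, if_neg (by omega)]
        exact Matrix.zero_apply _ _
      · rw [dif_neg hk, Matrix.one_apply]
        split_ifs with h1 h2 h2
        · rfl
        · exact absurd (show (i : ℕ) = (k : ℕ) by rw [Fin.mk.injEq] at h1; omega) h2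
        · exact absurd (show _ by rw [Fin.mk.injEq]; omega : (⟨(i : ℕ) - d, by omega⟩ : Fin d) = ⟨(k : ℕ) - d, by omega⟩) h1
        · rfl
    rw [Finset.sum_congr rfl fun k _ => hone k, Finset.sum_eq_single i, if_pos rfl, one_mul,
      phiSol_init _ _ _ _ _ _ _ _ (by omega), reindex_fromBlocks_apply, dif_neg hi]
    · by_cases hc : (c : ℕ) < d
      · rw [dif_pos hc, Matrix.one_apply]
        split_ifs with h1 h2 h2
        · rfl
        · exfalso
          apply h2
          apply Fin.ext
          simp only [Fin.val_mk]
          omega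
        · exfalso
          rw [Fin.mk.injEq] at h2
          omega
        · rfl
      · rw [dif_neg hc, if_neg (by omega), Matrix.zero_apply]
    · intro b _ hbne
      rw [if_neg (by intro hh; exact hbne (Fin.ext (by omega))), zero_mul]
    · intro h
      exact absurd (Finset.mem_univ _) h


/-- `M_E(θ) = diag(B, I_d) · A_E(θ+(d−1)d⁻¹ω)···A_E(θ) · diag(B⁻¹, I_d)`. -/
theorem MtransLR_eq_AEprod (hd : 1 ≤ d) (v : ℕ → ℂ) (hv : v d ≠ 0) (g : ℝ → ℂ)
    (hg : ∀ x : ℝ, g (x + 1) = g x) (ω θ : ℝ) (E : ℂ) :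
    MtransLR d v g ω E θ
      = Matrix.reindex (sumEquiv d) (sumEquiv d)
            (Matrix.fromBlocks (Blr d v) 0 0 (1 : Matrix (Fin d) (Fin d) ℂ))
        * AEprod d v g ω E d θ
        * Matrix.reindex (sumEquiv d) (sumEquiv d)
            (Matrix.fromBlocks (Blr d v)⁻¹ 0 0 (1 : Matrix (Fin d) (Fin d) ℂ)) := by
  rw [key_lemma d hd v hv g ω θ E]
  simp only [MtransLR]
  rw [Matrix.reindex_apply, Matrix.reindex_apply, Matrix.reindex_apply,
    Matrix.submatrix_mul_equiv, Matrix.fromBlocks_multiply]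
  rw [Matrix.mul_zero, add_zero, Matrix.mul_zero, zero_add, Matrix.mul_one, Matrix.one_mul,
    Matrix.zero_mul, add_zero, Matrix.one_mul, Matrix.zero_mul, add_zero]
end
end
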